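/- Let σ be the automorphism of ℚ[x,y] with σ(x) = -y, σ(y) = x, and D₁F = ∂_x(F/x), D₂F = ∂_y(F/y). If F ∈ ℚ[x,y] is fixed by σ and divisible by xy, then D₂D₁F and (D₁+D₂)F are polynomials fixed by σ. -/

import Mathlib

/-!
Write `F = x y Q`. Since `σ (x y) = -x y`, invariance of `F` makes `Q` anti-invariant. Away from the
axes `D₁F = y ∂ₓQ` and `D₂F = x ∂_y Q`, so `D₂D₁F = ∂_y ∂ₓ Q` and `(D₁+D₂)F = y ∂ₓQ + x ∂_y Q`.
The chain rule gives `σ ∘ ∂ₓ = -∂_y ∘ σ` and `σ ∘ ∂_y = ∂ₓ ∘ σ`, and with `σ Q = -Q` both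
polynomials are fixed by `σ`.
-/

open MvPolynomial

/-- `D₁F = ∂_x(F/x)`. -/
noncomputable def Dop1 (G : ℝ → ℝ → ℝ) : ℝ → ℝ → ℝ := fun a b => deriv (fun s => G s b / s) a

/-- `D₂F = ∂_y(F/y)`. -/
noncomputable def Dop2 (G : ℝ → ℝ → ℝ) : ℝ → ℝ → ℝ := fun a b => deriv (fun s => G a s / s) b

namespace MvPolynomial

variable {R : Type*} [CommSemiring R]

theorem pderiv_pderiv_comm {ι : Type*} (i j : ι) (P : MvPolynomial ι R) :
    pderiv i (pderiv j P) = pderiv j (pderiv i P) := by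
  classical
  induction P using MvPolynomial.induction_on with
  | C a => simp
  | add p q hp hq => simp [hp, hq]
  | mul_X p k ih =>
    simp only [pderiv_mul, pderiv_X, Pi.single_apply, map_add, ih]
    split_ifs <;> simp only [map_zero, pderiv_one] <;> ring

theorem pderiv_aeval {ι κ : Type*} [Fintype ι] (g : ι → MvPolynomial κ R) (i : κ)
    (P : MvPolynomial ι R) :
    pderiv i (aeval g P) = ∑ j, aeval g (pderiv j P) * pderiv i (g j) := by
  classical
  induction P using MvPolynomial.induction_on with
  | C a => simp
  | add p q hp hq => simp only [map_add, hp, hq, add_mul, Finset.sum_add_distrib]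
  | mul_X p k ih =>
    simp only [map_mul, aeval_X, pderiv_mul, ih, pderiv_X, Pi.single_apply, map_add, add_mul,
      Finset.sum_add_distrib, Finset.sum_mul]
    simp [mul_right_comm]

variable {𝕜 : Type*} [NontriviallyNormedField 𝕜] [Algebra R 𝕜]

theorem hasDerivAt_aeval_update {ι : Type*} [DecidableEq ι] (P : MvPolynomial ι R) (v : ι → 𝕜)
    (i : ι) (a : 𝕜) :
    HasDerivAt (fun s => aeval (Function.update v i s) P)
      (aeval (Function.update v i a) (pderiv i P)) a := by
  induction P using MvPolynomial.induction_on with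
  | C r => simpa using hasDerivAt_const a (algebraMap R 𝕜 r)
  | add p q hp hq => simp only [map_add]; exact hp.add hq
  | mul_X p k ih =>
    simp only [map_mul, aeval_X, pderiv_mul, map_add, pderiv_X]
    by_cases h : k = i
    · subst h
      simp only [Function.update_self, Pi.single_eq_same, map_one]
      exact ih.fun_mul (hasDerivAt_id' a)
    · simpa [Function.update_of_ne h, Pi.single_eq_of_ne h] using ih.mul_const (v k)

theorem hasDerivAt_aeval_fst (P : MvPolynomial (Fin 2) R) (x y : 𝕜) :
    HasDerivAt (fun s => aeval ![s, y] P) (aeval ![x, y] (pderiv 0 P)) x := by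
  have hv (s : 𝕜) : Function.update ![x, y] 0 s = ![s, y] := by ext j; fin_cases j <;> simp
  simpa only [hv] using hasDerivAt_aeval_update P ![x, y] 0 x

theorem hasDerivAt_aeval_snd (P : MvPolynomial (Fin 2) R) (x y : 𝕜) :
    HasDerivAt (fun s => aeval ![x, s] P) (aeval ![x, y] (pderiv 1 P)) y := by
  have hv (s : 𝕜) : Function.update ![x, y] 1 s = ![x, s] := by ext j; fin_cases j <;> simp
  simpa only [hv] using hasDerivAt_aeval_update P ![x, y] 1 y

end MvPolynomial

section QuarterTurn

variable {R : Type*} [CommRing R]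

noncomputable def quarterTurn : MvPolynomial (Fin 2) R →ₐ[R] MvPolynomial (Fin 2) R :=
  aeval ![-X 1, X 0]

@[simp] theorem quarterTurn_X_zero : quarterTurn (X 0 : MvPolynomial (Fin 2) R) = -X 1 := by
  simp [quarterTurn]

@[simp] theorem quarterTurn_X_one : quarterTurn (X 1 : MvPolynomial (Fin 2) R) = X 0 := by
  simp [quarterTurn]

theorem quarterTurn_pderiv_zero (P : MvPolynomial (Fin 2) R) :
    quarterTurn (pderiv 0 P) = -pderiv 1 (quarterTurn P) := by
  rw [quarterTurn, pderiv_aeval]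
  simp [Fin.sum_univ_two]

theorem quarterTurn_pderiv_one (P : MvPolynomial (Fin 2) R) :
    quarterTurn (pderiv 1 P) = pderiv 0 (quarterTurn P) := by
  rw [quarterTurn, pderiv_aeval]
  simp [Fin.sum_univ_two]

theorem quarterTurn_eq_neg_of_X_zero_mul_X_one_mul {Q : MvPolynomial (Fin 2) R}
    (h : quarterTurn (X 0 * X 1 * Q) = X 0 * X 1 * Q) : quarterTurn Q = -Q := by
  refine (isRegular_X.mul isRegular_X).left (?_ : X 0 * X 1 * quarterTurn Q = X 0 * X 1 * -Q)
  rw [map_mul, map_mul, quarterTurn_X_zero, quarterTurn_X_one] at h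
  linear_combination -h

theorem quarterTurn_pderiv_one_pderiv_zero {Q : MvPolynomial (Fin 2) R}
    (hQ : quarterTurn Q = -Q) :
    quarterTurn (pderiv 1 (pderiv 0 Q)) = pderiv 1 (pderiv 0 Q) := by
  simp only [quarterTurn_pderiv_one, quarterTurn_pderiv_zero, hQ, map_neg, neg_neg]
  exact pderiv_pderiv_comm 0 1 Q

theorem quarterTurn_X_one_mul_pderiv_zero_add_X_zero_mul_pderiv_one {Q : MvPolynomial (Fin 2) R}
    (hQ : quarterTurn Q = -Q) :
    quarterTurn (X 1 * pderiv 0 Q + X 0 * pderiv 1 Q) = X 1 * pderiv 0 Q + X 0 * pderiv 1 Q := by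
  simp only [map_add, map_mul, quarterTurn_X_zero, quarterTurn_X_one, quarterTurn_pderiv_zero,
    quarterTurn_pderiv_one, hQ, map_neg]
  ring

end QuarterTurn

theorem HasDerivAt.deriv_mul_id_div_id {𝕜 : Type*} [NontriviallyNormedField 𝕜] {f : 𝕜 → 𝕜}
    {f' a : 𝕜} (hf : HasDerivAt f f' a) (ha : a ≠ 0) :
    _root_.deriv (fun s => s * f s / s) a = f' := by
  refine (hf.congr_of_eventuallyEq ?_).deriv
  filter_upwards [eventually_ne_nhds ha] with s hs
  field_simp

theorem Dop1_eq_of_eq_mul {G : ℝ → ℝ → ℝ} {f : ℝ → ℝ} {x y f' : ℝ} (hx : x ≠ 0)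
    (hG : ∀ s, G s y = s * f s) (hf : HasDerivAt f f' x) : Dop1 G x y = f' := by
  simp only [Dop1, hG]
  exact hf.deriv_mul_id_div_id hx

theorem Dop2_eq_of_eq_mul {G : ℝ → ℝ → ℝ} {f : ℝ → ℝ} {x y f' : ℝ} (hy : y ≠ 0)
    (hG : ∀ t, G x t = t * f t) (hf : HasDerivAt f f' y) : Dop2 G x y = f' := by
  simp only [Dop2, hG]
  exact hf.deriv_mul_id_div_id hy

section
variable {R : Type*} [CommSemiring R] [Algebra R ℝ] (Q : MvPolynomial (Fin 2) R) {x y : ℝ}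

theorem Dop1_aeval_X_zero_mul_X_one_mul (hx : x ≠ 0) :
    Dop1 (fun a b => aeval ![a, b] (X 0 * X 1 * Q)) x y = y * aeval ![x, y] (pderiv 0 Q) := by
  refine Dop1_eq_of_eq_mul hx (fun s => ?_) ((hasDerivAt_aeval_fst Q x y).const_mul y)
  simp only [map_mul, aeval_X, Matrix.cons_val_zero, Matrix.cons_val_one]
  ring

theorem Dop2_aeval_X_zero_mul_X_one_mul (hy : y ≠ 0) :
    Dop2 (fun a b => aeval ![a, b] (X 0 * X 1 * Q)) x y = x * aeval ![x, y] (pderiv 1 Q) := by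
  refine Dop2_eq_of_eq_mul hy (fun t => ?_) ((hasDerivAt_aeval_snd Q x y).const_mul x)
  simp only [map_mul, aeval_X, Matrix.cons_val_zero, Matrix.cons_val_one]
  ring

theorem Dop2_Dop1_aeval_X_zero_mul_X_one_mul (hx : x ≠ 0) (hy : y ≠ 0) :
    Dop2 (Dop1 fun a b => aeval ![a, b] (X 0 * X 1 * Q)) x y =
      aeval ![x, y] (pderiv 1 (pderiv 0 Q)) :=
  Dop2_eq_of_eq_mul hy (fun _ => Dop1_aeval_X_zero_mul_X_one_mul Q hx)
    (hasDerivAt_aeval_snd (pderiv 0 Q) x y)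

end

/-- If `F ∈ ℚ[x,y]` is fixed by `σ : (x,y) ↦ (-y,x)` and divisible by `xy`, then
`D₂D₁F` and `(D₁+D₂)F` are polynomials fixed by `σ` (here `D₁F = ∂_x(F/x)`,
`D₂F = ∂_y(F/y)`, computed pointwise away from the axes). -/
theorem Dops_preserve_sigma_invariance (F : MvPolynomial (Fin 2) ℚ)
    (hσ : aeval ![-(X 1 : MvPolynomial (Fin 2) ℚ), X 0] F = F)
    (hdvd : (X 0 : MvPolynomial (Fin 2) ℚ) * X 1 ∣ F) :
    ∃ G H : MvPolynomial (Fin 2) ℚ,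
      aeval ![-(X 1 : MvPolynomial (Fin 2) ℚ), X 0] G = G ∧
      aeval ![-(X 1 : MvPolynomial (Fin 2) ℚ), X 0] H = H ∧
      ∀ x y : ℝ, x ≠ 0 → y ≠ 0 →
        Dop2 (Dop1 (fun a b : ℝ => aeval ![a, b] F)) x y = aeval ![x, y] G ∧
        Dop1 (fun a b : ℝ => aeval ![a, b] F) x y +
            Dop2 (fun a b : ℝ => aeval ![a, b] F) x y = aeval ![x, y] H := by
  obtain ⟨Q, rfl⟩ := hdvd
  have hQ : quarterTurn Q = -Q := quarterTurn_eq_neg_of_X_zero_mul_X_one_mul hσ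
  refine ⟨pderiv 1 (pderiv 0 Q), X 1 * pderiv 0 Q + X 0 * pderiv 1 Q,
    quarterTurn_pderiv_one_pderiv_zero hQ,
    quarterTurn_X_one_mul_pderiv_zero_add_X_zero_mul_pderiv_one hQ,
    fun x y hx hy => ⟨Dop2_Dop1_aeval_X_zero_mul_X_one_mul Q hx hy, ?_⟩⟩
  rw [Dop1_aeval_X_zero_mul_X_one_mul Q hx, Dop2_aeval_X_zero_mul_X_one_mul Q hy]
  simp
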